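/- Let t ∈ (0,1] and define β : ℤ → ℝ by β(n) = sgn(n)·|n|^{1/t}·log|n| for |n| ≥ 1 and β(0) = 0. Then Λ_β = {(n, β(n)) : n ∈ ℤ} is a spectrum of the self-affine measure μ = μ_{R,B} for R = [[2,1],[0,2]] and B = {(0,0),(1,0)}, and it satisfies dim_Be(Λ_β) = t and D_t^+(Λ_β) = 0. -/

import Mathlib

open MeasureTheory Filter Set Metric
open scoped ENNReal

noncomputable section

/-- The plane with the Euclidean metric. -/
abbrev Plane : Type := EuclideanSpace ℝ (Fin 2)

/-- The point `(a, b)` of the Euclidean plane. -/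
def pt (a b : ℝ) : Plane := WithLp.toLp 2 ![a, b]

/-- The self-affine measure `μ_{R,B}` for `R = [[2,1],[0,2]]`, `B = {(0,0),(1,0)}`:
the pushforward of Lebesgue measure on `[0,1]` under `x ↦ (x, 0)`. -/
def muRB : Measure Plane :=
  Measure.map (fun x : ℝ => pt x 0) (volume.restrict (Set.Icc (0:ℝ) 1))

instance : IsProbabilityMeasure (volume.restrict (Set.Icc (0:ℝ) 1)) :=
  ⟨by simp [Real.volume_Icc]⟩

lemma measurable_pt0 : Measurable (fun x : ℝ => pt x 0) := by
  unfold pt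
  refine Measurable.comp (g := WithLp.toLp 2) (f := fun x : ℝ => ![x, 0])
    (WithLp.measurable_toLp 2 _) ?_
  refine measurable_pi_lambda _ (fun i => ?_)
  fin_cases i
  · simp only [Matrix.cons_val_zero]
    exact measurable_id
  · simp only [Matrix.cons_val_one, Matrix.head_cons]
    exact measurable_const

instance : IsProbabilityMeasure muRB :=
  Measure.isProbabilityMeasure_map measurable_pt0.aemeasurable

/-- The Fourier transform `μ̂(ξ) = ∫ e^{-2πi⟨ξ,x⟩} dμ(x)` of a measure on the plane. -/
def fourierTransform (μ : Measure Plane) (ξ : Plane) : ℂ :=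
  ∫ x, Complex.exp ((-(2 * Real.pi * (inner ℝ ξ x : ℝ)) : ℝ) * Complex.I) ∂μ

/-- The exponential function `e_λ(x) = e^{-2πi⟨λ,x⟩}`. -/
def expFn (lam : Plane) : Plane → ℂ :=
  fun x => Complex.exp ((-(2 * Real.pi * (inner ℝ lam x : ℝ)) : ℝ) * Complex.I)

lemma expFn_memLp (μ : Measure Plane) [IsFiniteMeasure μ] (lam : Plane) :
    MemLp (expFn lam) 2 μ := by
  refine MemLp.of_bound ?_ 1 ?_
  · apply Continuous.aestronglyMeasurable
    unfold expFn
    have h1 : Continuous fun x : Plane => (inner ℝ lam x : ℝ) :=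
      continuous_const.inner continuous_id
    exact Complex.continuous_exp.comp
      ((Complex.continuous_ofReal.comp ((continuous_const.mul h1).neg)).mul continuous_const)
  · refine Eventually.of_forall fun x => ?_
    unfold expFn
    rw [Complex.norm_exp_ofReal_mul_I]

/-- The exponential `e_λ` as an element of `L²(μ)`. -/
def expLp (μ : Measure Plane) [IsFiniteMeasure μ] (lam : Plane) : Lp ℂ 2 μ :=
  (expFn_memLp μ lam).toLp _

/-- `Λ` is an orthogonal set of `μ`: the exponentials `{e_λ : λ ∈ Λ}` form an
orthonormal family in `L²(μ)`. -/
def IsOrthogonalSet (μ : Measure Plane) [IsFiniteMeasure μ] (Λ : Set Plane) : Prop :=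
  Orthonormal ℂ (fun lam : Λ => expLp μ lam)

/-- `Λ` is a spectrum of `μ`: the exponentials `{e_λ : λ ∈ Λ}` form an
orthonormal basis of `L²(μ)`. -/
def IsSpectrum (μ : Measure Plane) [IsFiniteMeasure μ] (Λ : Set Plane) : Prop :=
  Orthonormal ℂ (fun lam : Λ => expLp μ lam) ∧
    (Submodule.span ℂ (Set.range (fun lam : Λ => expLp μ lam))).topologicalClosure = ⊤

/-- The upper `r`-Beurling density
`D_r^+(Λ) = limsup_{h→∞} sup_{x} #(Λ ∩ B(x,h)) / h^r`. -/
def beurlingDensity (r : ℝ) (Λ : Set Plane) : ℝ≥0∞ :=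
  limsup (fun h : ℝ =>
    ⨆ x : Plane, ((Λ ∩ Metric.ball x h).encard : ℝ≥0∞) / ENNReal.ofReal (h ^ r)) atTop

/-- The upper `r`-density (centered at the origin)
`B_r^+(Λ) = limsup_{h→∞} #(Λ ∩ B(0,h)) / h^r`. -/
def upperDensity (r : ℝ) (Λ : Set Plane) : ℝ≥0∞ :=
  limsup (fun h : ℝ =>
    ((Λ ∩ Metric.ball (0 : Plane) h).encard : ℝ≥0∞) / ENNReal.ofReal (h ^ r)) atTop

/-- The Beurling dimension `dim_Be(Λ) = sup {r > 0 : D_r^+(Λ) = ∞}`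
(equal to `0` when the set is empty, by the convention `sSup ∅ = 0` in `ℝ`). -/
def beurlingDim (Λ : Set Plane) : ℝ :=
  sSup {r : ℝ | 0 < r ∧ beurlingDensity r Λ = ⊤}

/-- The Banach dimension `dim_Ba(Λ) = sup {r > 0 : B_r^+(Λ) = ∞}`. -/
def banachDim (Λ : Set Plane) : ℝ :=
  sSup {r : ℝ | 0 < r ∧ upperDensity r Λ = ⊤}

/-- The sign of an integer, as a real number. -/
def isgn (n : ℤ) : ℝ := (Int.sign n : ℝ)

end

/-! The exponentials `e_{(n, y n)}`, restricted to the segment `[0,1] × {0}` carrying `μ`, only see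
the first coordinate `n`. Wrapping the segment around the unit circle is measure preserving from
Haar measure to `μ` and turns them into the characters `fourier (-n)`, so they form an orthonormal
basis of `L²(μ)` whatever the second coordinates `y n` are.

For the density, write `φ = powerLog t` and `β = signedPowerLog t`. The points of `Λ_β` in a ball
of radius `h` have second coordinates `β n` in an interval of length `2h`. Since `φ` is
superadditive for `t ≤ 1` and `β` is odd, there are at most `2 #{n ≥ 1 : φ n < 2h} + 3 = o(h^t)`
of them. Conversely, for `s < t` the ball of radius `h` around `0` contains every `(n, β n)` with
`0 ≤ n ≤ h^s`, as `h^s + φ(h^s) < h`. -/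

open scoped Real Topology

lemma injective_pt_intCast (y : ℤ → ℝ) : Function.Injective fun n : ℤ => pt n (y n) :=
  fun n m h => by
    have h0 : (n : ℝ) = m := congrArg (fun v : Plane => v 0) h
    exact_mod_cast h0

theorem Submodule.topologicalClosure_span_eq_top_of_linearIsometry_comp
    {𝕜 E F ι : Type*} [RCLike 𝕜] [NormedAddCommGroup E] [InnerProductSpace 𝕜 E] [CompleteSpace E]
    [NormedAddCommGroup F] [InnerProductSpace 𝕜 F] (L : E →ₗᵢ[𝕜] F) {v : ι → E}
    (hv : (span 𝕜 (range (L ∘ v))).topologicalClosure = ⊤) :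
    (span 𝕜 (range v)).topologicalClosure = ⊤ := by
  rw [topologicalClosure_eq_top_iff, eq_bot_iff]
  intro f hf
  have hspan : span 𝕜 (range (L ∘ v)) ≤ (𝕜 ∙ L f)ᗮ := by
    refine span_le.mpr ?_
    rintro _ ⟨i, rfl⟩
    rw [SetLike.mem_coe, mem_orthogonal_singleton_iff_inner_left, Function.comp_apply,
      L.inner_map_map]
    exact inner_right_of_mem_orthogonal (subset_span (mem_range_self i)) hf
  have htop := topologicalClosure_minimal _ hspan (isClosed_orthogonal _)
  rw [hv, top_le_iff] at htop
  have hLf : L f ∈ (𝕜 ∙ L f)ᗮ := htop ▸ mem_top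
  rw [mem_orthogonal_singleton_iff_inner_right, inner_self_eq_zero] at hLf
  exact (mem_bot 𝕜).mpr (L.injective (hLf.trans L.map_zero.symm))

noncomputable def circleToPlane (z : AddCircle (1 : ℝ)) : Plane := pt (AddCircle.equivIoc 1 0 z) 0

lemma measurePreserving_circleToPlane :
    MeasurePreserving circleToPlane AddCircle.haarAddCircle muRB := by
  have hIoc : MeasurePreserving (fun z : AddCircle (1 : ℝ) => (AddCircle.equivIoc 1 0 z : ℝ))
      AddCircle.haarAddCircle (volume.restrict (Ioc 0 1)) := by
    have hmeas : Measurable (fun z : AddCircle (1 : ℝ) => (AddCircle.equivIoc 1 0 z : ℝ)) :=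
      measurable_subtype_coe.comp (AddCircle.measurableEquivIoc 1 0).measurable
    refine ⟨hmeas, ?_⟩
    have hmk := AddCircle.measurePreserving_mk (1 : ℝ) 0
    rw [zero_add] at hmk
    rw [← one_smul ℝ≥0∞ AddCircle.haarAddCircle, ← ENNReal.ofReal_one,
      ← AddCircle.volume_eq_smul_haarAddCircle, ← hmk.map_eq,
      Measure.map_map hmeas AddCircle.measurable_mk']
    conv_rhs => rw [← Measure.map_id (μ := volume.restrict (Ioc (0 : ℝ) 1))]
    refine Measure.map_congr ?_
    filter_upwards [ae_restrict_mem measurableSet_Ioc] with x hx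
    exact AddCircle.equivIoc_coe_of_mem (by simpa using hx)
  have hpt : MeasurePreserving (fun x : ℝ => pt x 0) (volume.restrict (Ioc 0 1)) muRB :=
    ⟨measurable_pt0, by rw [muRB, Measure.restrict_congr_set Ioc_ae_eq_Icc]⟩
  exact hpt.comp hIoc

lemma expFn_pt_pt (n : ℤ) (y x : ℝ) :
    expFn (pt n y) (pt x 0) = Complex.exp (2 * π * Complex.I * (-n : ℤ) * x) := by
  have hinner : inner ℝ (pt n y) (pt x 0) = n * x := by
    simp [pt, PiLp.inner_apply, Fin.sum_univ_two, mul_comm]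
  rw [expFn, hinner]
  push_cast
  ring_nf

lemma expFn_circleToPlane (n : ℤ) (y : ℝ) (z : AddCircle (1 : ℝ)) :
    expFn (pt n y) (circleToPlane z) = fourier (-n) z := by
  conv_rhs => rw [← AddCircle.coe_equivIoc (a := 0) (y := z)]
  rw [circleToPlane, expFn_pt_pt, fourier_coe_apply, Complex.ofReal_one, div_one]

lemma compMeasurePreserving_expLp (n : ℤ) (y : ℝ) :
    Lp.compMeasurePreserving circleToPlane measurePreserving_circleToPlane (expLp muRB (pt n y))
      = fourierLp 2 (-n) := by
  rw [expLp, Lp.toLp_compMeasurePreserving]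
  refine Lp.ext ((MemLp.coeFn_toLp _).trans (.trans ?_ (coeFn_fourierLp 2 (-n)).symm))
  exact .of_forall (expFn_circleToPlane n y)

theorem isSpectrum_muRB_range_pt_intCast (y : ℤ → ℝ) :
    IsSpectrum muRB (range fun n : ℤ => pt n (y n)) := by
  set F : ℤ → Plane := fun n => pt n (y n)
  set L : Lp ℂ 2 muRB →ₗᵢ[ℂ] Lp ℂ 2 AddCircle.haarAddCircle :=
    Lp.compMeasurePreservingₗᵢ ℂ circleToPlane measurePreserving_circleToPlane
  have hLF : L ∘ (fun n => expLp muRB (F n)) = fourierLp 2 ∘ Neg.neg :=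
    funext fun n => compMeasurePreserving_expLp n (y n)
  have hreindex : (fun lam : range F => expLp muRB lam)
      = (fun n => expLp muRB (F n)) ∘ (Equiv.ofInjective F (injective_pt_intCast y)).symm :=
    funext fun lam => by simp only [Function.comp_apply, Equiv.apply_ofInjective_symm]
  rw [IsSpectrum, hreindex, (Equiv.surjective _).range_comp]
  constructor
  · refine Orthonormal.comp ?_ _ (Equiv.injective _)
    rw [← L.orthonormal_comp_iff, hLF]
    exact orthonormal_fourier.comp _ neg_injective
  · refine Submodule.topologicalClosure_span_eq_top_of_linearIsometry_comp L ?_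
    rw [hLF, neg_surjective.range_comp]
    exact span_fourierLp_closure_eq_top (by norm_num)

section BeurlingDensity

variable {Λ : Set Plane}

theorem beurlingDensity_eq_zero_of_eventually_le {t r : ℝ} (htr : t ≤ r)
    (hΛ : ∀ δ > 0, ∀ᶠ h in atTop, ∀ x : Plane,
      ((Λ ∩ ball x h).encard : ℝ≥0∞) ≤ ENNReal.ofReal (δ * h ^ t)) :
    beurlingDensity r Λ = 0 := by
  refine nonpos_iff_eq_zero.mp (ENNReal.le_of_forall_pos_le_add fun δ hδ _ => ?_)
  rw [zero_add]
  refine limsup_le_of_le (by isBoundedDefault) ?_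
  filter_upwards [hΛ δ hδ, eventually_ge_atTop 1] with h hcount h1
  refine iSup_le fun x => ENNReal.div_le_of_le_mul ((hcount x).trans ?_)
  rw [← ENNReal.ofReal_coe_nnreal, ← ENNReal.ofReal_mul (by positivity)]
  exact ENNReal.ofReal_le_ofReal
    (mul_le_mul_of_nonneg_left (Real.rpow_le_rpow_of_exponent_le h1 htr) δ.2)

theorem beurlingDensity_eq_top_of_eventually_le {r s : ℝ} (hrs : r < s)
    (hΛ : ∀ᶠ h in atTop, ENNReal.ofReal (h ^ s) ≤ (Λ ∩ ball 0 h).encard) :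
    beurlingDensity r Λ = ⊤ := by
  have hlim : Tendsto (fun h : ℝ => ENNReal.ofReal (h ^ (s - r))) atTop (𝓝 ⊤) :=
    ENNReal.tendsto_ofReal_atTop.comp (tendsto_rpow_atTop (sub_pos.mpr hrs))
  refine top_unique (hlim.limsup_eq ▸ limsup_le_limsup ?_)
  filter_upwards [hΛ, eventually_gt_atTop 0] with h hcount h0
  refine le_iSup_of_le 0 ?_
  rw [Real.rpow_sub h0, ENNReal.ofReal_div_of_pos (Real.rpow_pos_of_pos h0 r)]
  exact ENNReal.div_le_div_right hcount _

theorem beurlingDim_eq_of_beurlingDensity {t : ℝ} (ht : 0 < t)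
    (hlt : ∀ r ∈ Ioo 0 t, beurlingDensity r Λ = ⊤)
    (hge : ∀ r, t ≤ r → beurlingDensity r Λ = 0) : beurlingDim Λ = t := by
  have hset : {r | 0 < r ∧ beurlingDensity r Λ = ⊤} = Ioo 0 t := by
    ext r
    refine ⟨fun ⟨hr, htop⟩ => ⟨hr, lt_of_not_ge fun htr => ?_⟩, fun hr => ⟨hr.1, hlt r hr⟩⟩
    simp [hge r htr] at htop
  rw [beurlingDim, hset, csSup_Ioo ht]

end BeurlingDensity

lemma Int.encard_Icc (a b : ℤ) : (Icc a b).encard = (b + 1 - a).toNat := by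
  rw [← Finset.coe_Icc, encard_coe_eq_coe_finsetCard, Int.card_Icc]

lemma encard_abs_sub_lt_le_of_superadditive {φ : ℤ → ℝ}
    (hφ : ∀ a n, 1 ≤ a → a < n → φ (n - a) ≤ φ n - φ a) (c h : ℝ) :
    {n : ℤ | 1 ≤ n ∧ |φ n - c| < h}.encard ≤ {n : ℤ | 1 ≤ n ∧ φ n < 2 * h}.encard + 1 := by
  classical
  set S := {n : ℤ | 1 ≤ n ∧ |φ n - c| < h}
  rcases S.eq_empty_or_nonempty with hS | hS
  · simp [hS]
  obtain ⟨a, haS, hmin⟩ := Int.exists_least_of_bdd ⟨1, fun n (hn : n ∈ S) => hn.1⟩ hS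
  have hshift : (· - a) '' (S \ {a}) ⊆ {n : ℤ | 1 ≤ n ∧ φ n < 2 * h} := by
    rintro _ ⟨n, ⟨hnS, hna⟩, rfl⟩
    have han : a < n := lt_of_le_of_ne (hmin n hnS) (Ne.symm hna)
    refine ⟨show 1 ≤ n - a by omega, (hφ a n haS.1 han).trans_lt ?_⟩
    linarith [abs_lt.mp hnS.2, abs_lt.mp haS.2]
  calc S.encard = (S \ {a}).encard + 1 := (encard_sdiff_singleton_add_one haS).symm
    _ = ((· - a) '' (S \ {a})).encard + 1 := by
      rw [(sub_left_injective (b := a)).injOn.encard_image]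
    _ ≤ _ := by gcongr

lemma encard_abs_sub_lt_le_of_odd {y : ℤ → ℝ} (hy : ∀ n, y (-n) = -y n) (c h : ℝ) :
    {n : ℤ | |y n - c| < h}.encard ≤
      {n : ℤ | 1 ≤ n ∧ |y n - c| < h}.encard + {n : ℤ | 1 ≤ n ∧ |y n + c| < h}.encard + 1 := by
  have hsub : {n : ℤ | |y n - c| < h} ⊆ {n : ℤ | 1 ≤ n ∧ |y n - c| < h} ∪
      Neg.neg '' {n : ℤ | 1 ≤ n ∧ |y n + c| < h} ∪ {0} := by
    intro n hn
    rcases lt_trichotomy n 0 with hneg | rfl | hpos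
    · refine .inl (.inr ⟨-n, ⟨by omega, ?_⟩, neg_neg n⟩)
      rwa [hy, ← abs_neg, neg_add, neg_neg, ← sub_eq_add_neg]
    · exact .inr rfl
    · exact .inl (.inl ⟨hpos, hn⟩)
  calc _ ≤ _ := encard_le_encard hsub
    _ ≤ _ := (encard_union_le _ _).trans (by
      rw [encard_singleton]
      exact add_le_add ((encard_union_le _ _).trans (add_le_add le_rfl (encard_image_le _ _)))
        le_rfl)

lemma norm_pt_le (a b : ℝ) : ‖pt a b‖ ≤ |a| + |b| := by
  rw [EuclideanSpace.norm_eq, Fin.sum_univ_two]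
  refine Real.sqrt_le_iff.mpr ⟨by positivity, ?_⟩
  have hsq : ‖pt a b 0‖ ^ 2 + ‖pt a b 1‖ ^ 2 = |a| ^ 2 + |b| ^ 2 := by simp [pt]
  rw [hsq]
  nlinarith [abs_nonneg a, abs_nonneg b]

lemma abs_sub_lt_of_pt_mem_ball {a b h : ℝ} {x : Plane} (hx : pt a b ∈ ball x h) :
    |b - x 1| < h :=
  (PiLp.dist_apply_le (pt a b) x 1).trans_lt hx

lemma encard_range_pt_intCast_inter (y : ℤ → ℝ) (s : Set Plane) :
    ((range fun n : ℤ => pt n (y n)) ∩ s).encard = {n : ℤ | pt n (y n) ∈ s}.encard := by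
  rw [← image_preimage_eq_range_inter, (injective_pt_intCast y).injOn.encard_image]
  rfl

noncomputable def powerLog (t x : ℝ) : ℝ := x ^ (1 / t) * Real.log x

noncomputable def signedPowerLog (t : ℝ) (n : ℤ) : ℝ :=
  isgn n * |(n : ℝ)| ^ (1 / t) * Real.log |(n : ℝ)|

section PowerLog

variable {t : ℝ}

lemma powerLog_nonneg {x : ℝ} (hx : 1 ≤ x) : 0 ≤ powerLog t x :=
  mul_nonneg (Real.rpow_nonneg (by linarith) _) (Real.log_nonneg hx)

lemma powerLog_monotoneOn (ht : 0 < t) : MonotoneOn (powerLog t) (Ici 1) := by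
  intro x (hx : 1 ≤ x) y _ hxy
  exact mul_le_mul (Real.rpow_le_rpow (by linarith) hxy (by positivity))
    (Real.log_le_log (by linarith) hxy) (Real.log_nonneg hx) (Real.rpow_nonneg (by linarith) _)

lemma powerLog_sub_le (ht0 : 0 < t) (ht1 : t ≤ 1) {a x : ℝ} (ha : 1 ≤ a) (hax : a < x) :
    powerLog t (x - a) ≤ powerLog t x - powerLog t a := by
  have hp : 1 ≤ 1 / t := by rw [le_div_iff₀ ht0]; linarith
  have hsuper : (x - a) ^ (1 / t) ≤ x ^ (1 / t) - a ^ (1 / t) := by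
    have := NNReal.add_rpow_le_rpow_add (x - a).toNNReal a.toNNReal hp
    rw [← NNReal.coe_le_coe] at this
    push_cast at this
    rw [Real.coe_toNNReal _ (by linarith), Real.coe_toNNReal _ (by linarith), sub_add_cancel]
      at this
    linarith
  have hlog_sub : Real.log (x - a) ≤ Real.log x := Real.log_le_log (by linarith) (by linarith)
  have hlog_a : Real.log a ≤ Real.log x := Real.log_le_log (by linarith) hax.le
  have hlog_x : 0 ≤ Real.log x := Real.log_nonneg (by linarith)
  have hxa : 0 ≤ (x - a) ^ (1 / t) := Real.rpow_nonneg (by linarith) _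
  have ha' : 0 ≤ a ^ (1 / t) := Real.rpow_nonneg (by linarith) _
  unfold powerLog
  nlinarith [mul_le_mul_of_nonneg_left hlog_sub hxa, mul_le_mul_of_nonneg_left hlog_a ha',
    mul_le_mul_of_nonneg_right hsuper hlog_x]

lemma eventually_rpow_add_powerLog_rpow_lt (ht0 : 0 < t) (ht1 : t ≤ 1) {s : ℝ} (hs0 : 0 < s)
    (hst : s < t) : ∀ᶠ h in atTop, h ^ s + powerLog t (h ^ s) < h := by
  -- `log h ≤ h^(c - s/t) / (c - s/t)` puts `φ(h^s) = s h^(s/t) log h` below a multiple of `h^c`.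
  obtain ⟨c, hsc, hc1⟩ := exists_between ((div_lt_one ht0).mpr hst)
  have hs_le : s ≤ c := (le_div_self hs0.le ht0 ht1).trans hsc.le
  rw [← sub_pos] at hsc hc1
  filter_upwards [eventually_ge_atTop 1,
    (tendsto_rpow_atTop hc1).eventually_gt_atTop (1 + s / (c - s / t))] with h h1 hlarge
  have h0 : 0 < h := by linarith
  have hlog : Real.log h ≤ h ^ (c - s / t) / (c - s / t) := Real.log_le_rpow_div h0.le hsc
  have hφ : powerLog t (h ^ s) ≤ s / (c - s / t) * h ^ c := by
    rw [powerLog, ← Real.rpow_mul h0.le, Real.log_rpow h0, mul_one_div]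
    calc h ^ (s / t) * (s * Real.log h)
        ≤ h ^ (s / t) * (s * (h ^ (c - s / t) / (c - s / t))) := by gcongr
      _ = s / (c - s / t) * (h ^ (s / t) * h ^ (c - s / t)) := by ring
      _ = _ := by rw [← Real.rpow_add h0, add_sub_cancel]
  calc h ^ s + powerLog t (h ^ s) ≤ h ^ c + s / (c - s / t) * h ^ c :=
        add_le_add (Real.rpow_le_rpow_of_exponent_le h1 hs_le) hφ
    _ = (1 + s / (c - s / t)) * h ^ c := by ring
    _ < h ^ (1 - c) * h ^ c := mul_lt_mul_of_pos_right hlarge (Real.rpow_pos_of_pos h0 c)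
    _ = h := by rw [← Real.rpow_add h0, sub_add_cancel, Real.rpow_one]

lemma signedPowerLog_of_one_le {n : ℤ} (hn : 1 ≤ n) : signedPowerLog t n = powerLog t n := by
  have hn' : (0 : ℝ) < n := by exact_mod_cast hn
  rw [signedPowerLog, powerLog, isgn, Int.sign_eq_one_of_pos (by omega), abs_of_pos hn']
  simp

lemma signedPowerLog_neg (n : ℤ) : signedPowerLog t (-n) = -signedPowerLog t n := by
  simp [signedPowerLog, isgn, neg_mul]

lemma signedPowerLog_zero : signedPowerLog t 0 = 0 := by
  simp [signedPowerLog, isgn]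

lemma signedPowerLog_sub_le (ht0 : 0 < t) (ht1 : t ≤ 1) {a n : ℤ} (ha : 1 ≤ a) (han : a < n) :
    signedPowerLog t (n - a) ≤ signedPowerLog t n - signedPowerLog t a := by
  rw [signedPowerLog_of_one_le (by omega), signedPowerLog_of_one_le ha,
    signedPowerLog_of_one_le (by omega), Int.cast_sub]
  exact powerLog_sub_le ht0 ht1 (by exact_mod_cast ha) (by exact_mod_cast han)

lemma encard_abs_signedPowerLog_sub_lt_le (ht0 : 0 < t) (ht1 : t ≤ 1) (c h : ℝ) :
    {n : ℤ | |signedPowerLog t n - c| < h}.encard ≤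
      2 * {n : ℤ | 1 ≤ n ∧ signedPowerLog t n < 2 * h}.encard + 3 := by
  have hsuper := encard_abs_sub_lt_le_of_superadditive
    (fun a n => signedPowerLog_sub_le ht0 ht1 (a := a) (n := n)) (h := h)
  have hc := hsuper (-c)
  simp only [sub_neg_eq_add] at hc
  calc _ ≤ _ := encard_abs_sub_lt_le_of_odd signedPowerLog_neg c h
    _ ≤ _ := add_le_add (add_le_add (hsuper c) hc) le_rfl
    _ = _ := by ring

lemma eventually_encard_signedPowerLog_lt_le (ht : 0 < t) {ε : ℝ} (hε : 0 < ε) :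
    ∀ᶠ h in atTop, {n : ℤ | 1 ≤ n ∧ signedPowerLog t n < 2 * h}.encard ≤ ⌊ε * h ^ t⌋₊ := by
  have hlarge : Tendsto (fun h : ℝ => ε * h ^ t) atTop atTop :=
    (tendsto_rpow_atTop ht).const_mul_atTop hε
  filter_upwards [hlarge.eventually_ge_atTop 1, eventually_gt_atTop 0,
    (Real.tendsto_log_atTop.comp hlarge).eventually_ge_atTop (2 / ε ^ (1 / t))]
    with h h1 h0 hlog
  have hφ : 2 * h ≤ powerLog t (ε * h ^ t) := by
    have hεt : 0 < ε ^ (1 / t) := Real.rpow_pos_of_pos hε _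
    rw [powerLog, Real.mul_rpow hε.le (by positivity), ← Real.rpow_mul h0.le,
      mul_one_div_cancel ht.ne', Real.rpow_one]
    rw [Function.comp_apply, div_le_iff₀' hεt] at hlog
    nlinarith
  have hle : ∀ n : ℤ, 1 ≤ n → signedPowerLog t n < 2 * h → n ≤ ⌊ε * h ^ t⌋ := by
    intro n hn hβ
    rw [Int.le_floor]
    by_contra! hlt
    have hmono := powerLog_monotoneOn ht (show (1 : ℝ) ≤ ε * h ^ t from h1)
      (show (1 : ℝ) ≤ n from h1.trans hlt.le) hlt.le
    rw [signedPowerLog_of_one_le hn] at hβ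
    linarith
  calc _ ≤ (Icc 1 ⌊ε * h ^ t⌋).encard :=
        encard_le_encard fun n hn => ⟨hn.1, hle n hn.1 hn.2⟩
    _ = _ := by rw [Int.encard_Icc, add_sub_cancel_right, Int.floor_toNat]

theorem eventually_encard_range_signedPowerLog_inter_ball_le (ht0 : 0 < t) (ht1 : t ≤ 1) {δ : ℝ}
    (hδ : 0 < δ) :
    ∀ᶠ h in atTop, ∀ x : Plane,
      (((range fun n : ℤ => pt n (signedPowerLog t n)) ∩ ball x h).encard : ℝ≥0∞) ≤
        ENNReal.ofReal (δ * h ^ t) := by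
  filter_upwards [eventually_encard_signedPowerLog_lt_le ht0 (ε := δ / 4) (by positivity),
    ((tendsto_rpow_atTop ht0).const_mul_atTop (by positivity : 0 < δ / 4)).eventually_ge_atTop 3]
    with h hcount hlarge x
  set m := ⌊δ / 4 * h ^ t⌋₊
  have hm : (m : ℝ) ≤ δ / 4 * h ^ t := Nat.floor_le (by linarith)
  have hcard : ((range fun n : ℤ => pt n (signedPowerLog t n)) ∩ ball x h).encard ≤
      (2 * m + 3 : ℕ) := by
    rw [encard_range_pt_intCast_inter]
    calc _ ≤ {n : ℤ | |signedPowerLog t n - x 1| < h}.encard :=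
          encard_le_encard fun n hn => abs_sub_lt_of_pt_mem_ball hn
      _ ≤ _ := encard_abs_signedPowerLog_sub_lt_le ht0 ht1 (x 1) h
      _ ≤ 2 * m + 3 := by gcongr
      _ = _ := by push_cast; rfl
  calc _ ≤ (((2 * m + 3 : ℕ) : ℕ∞) : ℝ≥0∞) := ENat.toENNReal_le.mpr hcard
    _ = ENNReal.ofReal (2 * m + 3) := by
      rw [ENat.toENNReal_coe, ← ENNReal.ofReal_natCast]
      push_cast
      rfl
    _ ≤ _ := ENNReal.ofReal_le_ofReal (by linarith)

theorem eventually_rpow_le_encard_range_signedPowerLog_inter_ball (ht0 : 0 < t) (ht1 : t ≤ 1)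
    {s : ℝ} (hs0 : 0 < s) (hst : s < t) :
    ∀ᶠ h in atTop, ENNReal.ofReal (h ^ s) ≤
      ((range fun n : ℤ => pt n (signedPowerLog t n)) ∩ ball 0 h).encard := by
  filter_upwards [eventually_ge_atTop 1, eventually_rpow_add_powerLog_rpow_lt ht0 ht1 hs0 hst]
    with h h1 hsmall
  have hs1 : 1 ≤ h ^ s := Real.one_le_rpow h1 hs0.le
  set m := ⌊h ^ s⌋₊
  have hsub : Icc (0 : ℤ) m ⊆ {n : ℤ | pt n (signedPowerLog t n) ∈ ball 0 h} := by
    rintro n ⟨hn0, hnm⟩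
    have hn : (n : ℝ) ≤ h ^ s := by
      have : (n : ℝ) ≤ m := by exact_mod_cast hnm
      exact this.trans (Nat.floor_le (by linarith))
    have hβ : |signedPowerLog t n| ≤ powerLog t (h ^ s) := by
      rcases hn0.eq_or_lt with rfl | hpos
      · simpa [signedPowerLog_zero] using powerLog_nonneg hs1
      · have h1n : (1 : ℝ) ≤ n := by exact_mod_cast hpos
        rw [signedPowerLog_of_one_le hpos, abs_of_nonneg (powerLog_nonneg h1n)]
        exact powerLog_monotoneOn ht0 h1n hs1 hn
    change pt (n : ℝ) (signedPowerLog t n) ∈ ball 0 h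
    rw [mem_ball_zero_iff]
    calc _ ≤ |(n : ℝ)| + |signedPowerLog t n| := norm_pt_le _ _
      _ ≤ h ^ s + powerLog t (h ^ s) :=
        add_le_add (by rwa [abs_of_nonneg (by exact_mod_cast hn0)]) hβ
      _ < h := hsmall
  have hcard : ((m + 1 : ℕ) : ℕ∞) ≤
      ((range fun n : ℤ => pt n (signedPowerLog t n)) ∩ ball 0 h).encard := by
    rw [encard_range_pt_intCast_inter]
    calc ((m + 1 : ℕ) : ℕ∞) = (Icc (0 : ℤ) m).encard := by rw [Int.encard_Icc]; simp
      _ ≤ _ := encard_le_encard hsub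
  calc ENNReal.ofReal (h ^ s) ≤ ENNReal.ofReal (m + 1 : ℕ) :=
        ENNReal.ofReal_le_ofReal (by push_cast; exact (Nat.lt_floor_add_one _).le)
    _ = (((m + 1 : ℕ) : ℕ∞) : ℝ≥0∞) := by rw [ENNReal.ofReal_natCast, ENat.toENNReal_coe]
    _ ≤ _ := ENat.toENNReal_le.mpr hcard

end PowerLog

/-- For `t ∈ (0,1]` and `β(n) = sgn(n)·|n|^{1/t}·log|n|` (with `β 0 = 0`),
the set `Λ_β` is a spectrum of `μ_{R,B}` with `dim_Be(Λ_β) = t` and `D_t^+(Λ_β) = 0`. -/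
theorem isSpectrum_muRB_power_log (t : ℝ) (ht : t ∈ Set.Ioc (0 : ℝ) 1) :
    IsSpectrum muRB
        (Set.range fun n : ℤ =>
          pt (n : ℝ) (isgn n * |(n : ℝ)| ^ (1 / t) * Real.log |(n : ℝ)|)) ∧
      beurlingDim
        (Set.range fun n : ℤ =>
          pt (n : ℝ) (isgn n * |(n : ℝ)| ^ (1 / t) * Real.log |(n : ℝ)|)) = t ∧
      beurlingDensity t
        (Set.range fun n : ℤ =>
          pt (n : ℝ) (isgn n * |(n : ℝ)| ^ (1 / t) * Real.log |(n : ℝ)|)) = 0 := by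
  obtain ⟨ht0, ht1⟩ := ht
  have hzero : ∀ r, t ≤ r →
      beurlingDensity r (range fun n : ℤ => pt n (signedPowerLog t n)) = 0 :=
    fun r htr => beurlingDensity_eq_zero_of_eventually_le htr
      fun _ hδ => eventually_encard_range_signedPowerLog_inter_ball_le ht0 ht1 hδ
  have htop : ∀ r ∈ Ioo 0 t,
      beurlingDensity r (range fun n : ℤ => pt n (signedPowerLog t n)) = ⊤ := by
    rintro r ⟨hr0, hrt⟩
    exact beurlingDensity_eq_top_of_eventually_le (s := (r + t) / 2) (by linarith)
      (eventually_rpow_le_encard_range_signedPowerLog_inter_ball ht0 ht1 (by linarith)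
        (by linarith))
  exact ⟨isSpectrum_muRB_range_pt_intCast _, beurlingDim_eq_of_beurlingDensity ht0 htop hzero,
    hzero t le_rfl⟩
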